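/- Suppose n = 2m and fix a count vector v = (v₁₁, v₁₀, v₀₁, v₀₀) with v₁₁ + v₁₀ + v₀₁ + v₀₀ = n. Suppose at least one of the following holds: (1) v₁₀ ≥ 2 and the pmf of T(v − a, Z') is symmetric–decreasing on (m−1)^{-1}ℤ for every a ∈ {(1,1,0,0), (0,2,0,0), (0,1,1,0), (0,1,0,1)} such that v − a has nonnegative entries, where Z' is uniform on Z(n−2); or (2) v₀₁ ≥ 2 and the same holds for every a ∈ {(1,0,1,0), (0,1,1,0), (0,0,2,0), (0,0,1,1)} such that v − a has nonnegative entries. Then the pmf of T(v, Z) is symmetric–decreasing on m^{-1}ℤ. -/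

import Mathlib

open Finset

/-- Real value of a binary outcome. -/
noncomputable def b2r (b : Bool) : ℝ := if b then 1 else 0

/-- All assignments of `n` subjects in which exactly `m` receive treatment. -/
def Assign (n m : ℕ) : Finset (Fin n → Bool) :=
  Finset.univ.filter fun z => (Finset.univ.filter fun i => z i = true).card = m

/-- Probability of the event `E` under the uniform distribution on `Assign n m`. -/
noncomputable def Pr (n m : ℕ) (E : (Fin n → Bool) → Prop) : ℝ :=
  haveI : DecidablePred E := fun z => Classical.propDecidable (E z)
  (((Assign n m).filter E).card : ℝ) / ((Assign n m).card : ℝ)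

/-- The sample average treatment effect `τ(w)`.  For a table `w`, `(w i).1` is the
control potential outcome `w_i(0)` and `(w i).2` is the treatment potential outcome
`w_i(1)`. -/
noncomputable def sate (n : ℕ) (w : Fin n → Bool × Bool) : ℝ :=
  (∑ j, (b2r (w j).2 - b2r (w j).1)) / (n : ℝ)

/-- Observed outcomes generated by the table `w` under the assignment `z`. -/
def obsOutcome (n : ℕ) (w : Fin n → Bool × Bool) (z : Fin n → Bool) : Fin n → Bool :=
  fun j => if z j then (w j).2 else (w j).1

/-- The Neyman difference-in-means estimator `T(Y, z)`. -/
noncomputable def neyman (n m : ℕ) (Y z : Fin n → Bool) : ℝ :=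
  (∑ j, if z j then b2r (Y j) else 0) / (m : ℝ)
    - (∑ j, if z j then 0 else b2r (Y j)) / ((n : ℝ) - (m : ℝ))

/-- Permutation `p`-value of the table `w` given observed data `(Y, z)`. -/
noncomputable def pval (n m : ℕ) (w : Fin n → Bool × Bool) (Y z : Fin n → Bool) : ℝ :=
  Pr n m fun z' =>
    |neyman n m (obsOutcome n w z') z' - sate n w| ≥ |neyman n m Y z - sate n w|

/-- The table `w` is possible given the observed data `(Y, z)`. -/
def PossibleTable (n : ℕ) (w : Fin n → Bool × Bool) (Y z : Fin n → Bool) : Prop :=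
  ∀ j, (z j = true → (w j).2 = Y j) ∧ (z j = false → (w j).1 = Y j)

/-- Lower endpoint `L_α` of the exact confidence interval `I_α`. -/
noncomputable def Lb (n m : ℕ) (α : ℝ) (Y z : Fin n → Bool) : ℝ :=
  sInf {t : ℝ | ∃ w, PossibleTable n w Y z ∧ α ≤ pval n m w Y z ∧ sate n w = t}

/-- Upper endpoint `U_α` of the exact confidence interval `I_α`. -/
noncomputable def Ub (n m : ℕ) (α : ℝ) (Y z : Fin n → Bool) : ℝ :=
  sSup {t : ℝ | ∃ w, PossibleTable n w Y z ∧ α ≤ pval n m w Y z ∧ sate n w = t}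

/-- `vcount n w a b` is the number of subjects whose treatment potential outcome is `a`
and whose control potential outcome is `b`; e.g. `vcount n w true false = v₁₀`. -/
def vcount (n : ℕ) (w : Fin n → Bool × Bool) (a b : Bool) : ℕ :=
  (Finset.univ.filter fun i => (w i).2 = a ∧ (w i).1 = b).card

/-- `ncount n Y z a b = n_{ab}`, the number of subjects with assignment `a` and
observed outcome `b`. -/
def ncount (n : ℕ) (Y z : Fin n → Bool) (a b : Bool) : ℕ :=
  (Finset.univ.filter fun j => z j = a ∧ Y j = b).card

/-- The pmf of the Neyman estimator `T(w, Z)` under the uniform random assignment. -/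
noncomputable def pmfT (n m : ℕ) (w : Fin n → Bool × Bool) : ℝ → ℝ :=
  fun t => Pr n m fun z => neyman n m (obsOutcome n w z) z = t

/-- The lattice `m⁻¹ ℤ ⊆ ℝ`. -/
def lattZ (m : ℕ) : Set ℝ := {x | ∃ k : ℤ, x = (k : ℝ) / (m : ℝ)}

/-- The lattice `m⁻¹ (2ℤ) ⊆ ℝ`. -/
def lattEven (m : ℕ) : Set ℝ := {x | ∃ k : ℤ, x = (2 * (k : ℝ)) / (m : ℝ)}

/-- The lattice `m⁻¹ (2ℤ + 1) ⊆ ℝ`. -/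
def lattOdd (m : ℕ) : Set ℝ := {x | ∃ k : ℤ, x = (2 * (k : ℝ) + 1) / (m : ℝ)}

/-- `f` is symmetric about `μ` and decreasing away from `μ` along the lattice `L`
(symmetric–decreasing, SD). -/
def SDon (f : ℝ → ℝ) (L : Set ℝ) (μ : ℝ) : Prop :=
  (∀ x : ℝ, μ + x ∈ L → f (μ - x) = f (μ + x)) ∧
    ∀ x y : ℝ, 0 ≤ x → x ≤ y → μ + x ∈ L → μ + y ∈ L → f (μ + y) ≤ f (μ + x)


/-!
For `n = 2 * m` the estimator is `T(w, z) = (∑_{z i} (w_i(1) + w_i(0)) - ∑_i w_i(0)) / m`, so the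
SD property of `T(w, Z)` is the SD property of `N_D(s)`, the number of `m`-subsets of the units
`D` whose weights `c_i = w_i(1) + w_i(0)` total `s`, about half the total weight.

Fix a unit `i` of weight `1`, which exists under either hypothesis. Counting the pairs `(A, j)`
with `j ≠ i` on the other side of `A` from `i` in two ways gives
`m N_D(s) = ∑_{j ≠ i} (N_{D∖{i,j}}(s - c_i) + N_{D∖{i,j}}(s - c_j))`, since every `m`-subset
separates `i` from exactly `m` other units. As `|c_i - c_j| ≤ 1`, each summand adds two
translates of an SD sequence whose centres are at most one step apart, which is again SD about
the common centre of all summands; and a sum of SD sequences with a common centre is SD.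
-/

section SymmDecreasing

variable {M : Type*}

/-- The centre of symmetry is `c / 2`, stored doubled so that it stays an integer. -/
def IsSymmDecreasing [LE M] (N : ℤ → M) (c : ℤ) : Prop :=
  (∀ s, N (c - s) = N s) ∧ ∀ s, c ≤ 2 * s → N (s + 1) ≤ N s

namespace IsSymmDecreasing

variable {N : ℤ → M} {c : ℤ}

theorem succ_le [Preorder M] (h : IsSymmDecreasing N c) {s : ℤ} (hs : c ≤ 2 * s + 1) :
    N (s + 1) ≤ N s := by
  rcases hs.lt_or_eq with hs | hs
  · exact h.2 s (by omega)
  · rw [← h.1 (s + 1), show c - (s + 1) = s by omega]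

theorem antitone [Preorder M] (h : IsSymmDecreasing N c) {s t : ℤ} (hs : c ≤ 2 * s)
    (hst : s ≤ t) : N t ≤ N s := by
  induction t, hst using Int.leInduction with
  | base => exact le_rfl
  | succ t hst ih => exact (h.2 t (by omega)).trans ih

theorem add_shift [AddCommMonoid M] [PartialOrder M] [IsOrderedAddMonoid M]
    (h : IsSymmDecreasing N c) {a b : ℤ} (hab : a ≤ b + 1) (hba : b ≤ a + 1) :
    IsSymmDecreasing (fun s => N (s - a) + N (s - b)) (c + a + b) := by
  refine ⟨fun s => ?_, fun s hs => ?_⟩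
  · beta_reduce
    rw [show c + a + b - s - a = c - (s - b) by ring, show c + a + b - s - b = c - (s - a) by ring,
      h.1, h.1, add_comm]
  · beta_reduce
    rw [show s + 1 - a = s - a + 1 by ring, show s + 1 - b = s - b + 1 by ring]
    exact add_le_add (h.succ_le (by omega)) (h.succ_le (by omega))

theorem sum [AddCommMonoid M] [PartialOrder M] [IsOrderedAddMonoid M] {ι : Type*}
    {t : Finset ι} {N : ι → ℤ → M} (h : ∀ j ∈ t, IsSymmDecreasing (N j) c) :
    IsSymmDecreasing (fun s => ∑ j ∈ t, N j s) c :=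
  ⟨fun s => Finset.sum_congr rfl fun j hj => (h j hj).1 s,
    fun s hs => Finset.sum_le_sum fun j hj => (h j hj).2 s hs⟩

end IsSymmDecreasing

theorem isSymmDecreasing_comp_iff {M' : Type*} [PartialOrder M] [Preorder M'] {g : M → M'}
    (hg : ∀ a b, g a ≤ g b ↔ a ≤ b) {N : ℤ → M} {c : ℤ} :
    IsSymmDecreasing (g ∘ N) c ↔ IsSymmDecreasing N c := by
  have hinj : ∀ a b, g a = g b ↔ a = b := fun a b =>
    ⟨fun h => le_antisymm ((hg a b).1 h.le) ((hg b a).1 h.ge), congrArg g⟩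
  simp only [IsSymmDecreasing, Function.comp_apply, hinj, hg]

theorem sDon_lattZ_iff {f : ℝ → ℝ} {m : ℕ} (hm : 0 < m) {μ : ℝ} {c d : ℤ}
    (hμ : 2 * m * μ = c - 2 * d) :
    SDon f (lattZ m) μ ↔ IsSymmDecreasing (fun s : ℤ => f ((s - d) / m)) c := by
  have hm' : (0 : ℝ) < m := by exact_mod_cast hm
  have hlatt : ∀ x, x ∈ lattZ m ↔ ∃ s : ℤ, x = (s - d) / m := fun x =>
    ⟨fun ⟨k, hk⟩ => ⟨k + d, by rw [hk]; push_cast; ring⟩,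
      fun ⟨s, hs⟩ => ⟨s - d, by rw [hs]; push_cast; ring⟩⟩
  have hrefl : ∀ s : ℤ, μ - ((s - d) / m - μ) = ((c - s : ℤ) - d) / m := fun s => by
    field_simp; push_cast; linarith
  have hcentre : ∀ s : ℤ, μ ≤ (s - d) / m ↔ c ≤ 2 * s := fun s => by
    rw [le_div_iff₀ hm', ← Int.cast_le (R := ℝ)]
    push_cast
    constructor <;> intro <;> linarith
  have hmono : ∀ s t : ℤ, ((s - d) / m : ℝ) ≤ (t - d) / m ↔ s ≤ t := fun s t => by
    rw [div_le_div_iff_of_pos_right hm', sub_le_sub_iff_right, Int.cast_le]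
  constructor
  · rintro ⟨hsymm, hdecr⟩
    refine ⟨fun s => ?_, fun s hs => ?_⟩
    · have := hsymm ((s - d) / m - μ) ((hlatt _).2 ⟨s, by ring⟩)
      rwa [hrefl, add_sub_cancel] at this
    · have := hdecr ((s - d) / m - μ) (((s + 1 : ℤ) - d) / m - μ)
        (by linarith [(hcentre s).2 hs]) (by linarith [(hmono s (s + 1)).2 (by omega)])
        ((hlatt _).2 ⟨s, by ring⟩) ((hlatt _).2 ⟨s + 1, by ring⟩)
      simpa only [add_sub_cancel] using this
  · intro h
    refine ⟨fun x hx => ?_, fun x y hx hxy hxl hyl => ?_⟩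
    · obtain ⟨s, hs⟩ := (hlatt _).1 hx
      rw [show x = (s - d) / m - μ by linarith, hrefl, add_sub_cancel]
      exact h.1 s
    · obtain ⟨s, hs⟩ := (hlatt _).1 hxl
      obtain ⟨t, ht⟩ := (hlatt _).1 hyl
      rw [hs, ht]
      exact h.antitone ((hcentre s).1 (by linarith)) ((hmono s t).1 (by linarith))

end SymmDecreasing

section SubsetWeightCount

variable {ι : Type*}

def subsetWeightCount (D : Finset ι) (k : ℕ) (c : ι → ℕ) (s : ℤ) : ℕ :=
  #{A ∈ D.powersetCard k | ((∑ i ∈ A, c i : ℕ) : ℤ) = s}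

theorem subsetWeightCount_map {κ : Type*} (e : κ ↪ ι) (D : Finset κ) (k : ℕ) (c : ι → ℕ) :
    subsetWeightCount (D.map e) k c = subsetWeightCount D k (c ∘ e) := by
  classical
  funext s
  simp only [subsetWeightCount, powersetCard_map, filter_map, card_map]
  congr 2
  ext A
  simp [mapEmbedding_apply, sum_map]

theorem isSymmDecreasing_subsetWeightCount_empty (c : ι → ℕ) :
    IsSymmDecreasing (subsetWeightCount ∅ 0 c) 0 := by
  have hN : ∀ s, subsetWeightCount (∅ : Finset ι) 0 c s = if s = 0 then 1 else 0 := fun s => by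
    by_cases hs : s = 0 <;>
      simp [subsetWeightCount, powersetCard_zero, filter_singleton, hs, eq_comm]
  refine ⟨fun s => ?_, fun s hs => ?_⟩
  · simp only [hN, zero_sub, neg_eq_zero]
  · rw [hN, if_neg (by omega)]
    exact Nat.zero_le _

variable [DecidableEq ι] {D : Finset ι} {c : ι → ℕ} {i j : ι}

theorem card_filter_mem_notMem_eq_subsetWeightCount (hi : i ∈ D) (hij : i ≠ j) (k : ℕ) (s : ℤ) :
    #{A ∈ D.powersetCard (k + 1) | i ∈ A ∧ j ∉ A ∧ ((∑ l ∈ A, c l : ℕ) : ℤ) = s} =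
      subsetWeightCount ((D.erase i).erase j) k c (s - c i) := by
  refine card_nbij' (fun A => A.erase i) (fun B => insert i B) ?_ ?_ ?_ ?_
  · intro A hA
    simp only [coe_filter, mem_powersetCard, Set.mem_ofPred_eq] at hA ⊢
    obtain ⟨⟨hAD, hAk⟩, hiA, hjA, hAs⟩ := hA
    refine ⟨⟨fun l hl => ?_, by rw [card_erase_of_mem hiA, hAk, Nat.add_sub_cancel]⟩, ?_⟩
    · simp only [mem_erase] at hl ⊢
      exact ⟨fun h => hjA (h ▸ hl.2), hl.1, hAD hl.2⟩
    · rw [← hAs, ← add_sum_erase A c hiA]; push_cast; ring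
  · intro B hB
    simp only [coe_filter, mem_powersetCard, Set.mem_ofPred_eq] at hB ⊢
    obtain ⟨⟨hBD, hBk⟩, hBs⟩ := hB
    have hiB : i ∉ B := fun h => by simpa using hBD h
    refine ⟨⟨insert_subset hi fun l hl => mem_of_mem_erase (mem_of_mem_erase (hBD hl)),
      by rw [card_insert_of_notMem hiB, hBk]⟩, mem_insert_self i B, ?_, ?_⟩
    · rw [mem_insert, not_or]
      exact ⟨hij.symm, fun h => by simpa using hBD h⟩
    · rw [sum_insert hiB, Nat.cast_add, hBs]; ring
  · intro A hA
    simp only [coe_filter, Set.mem_ofPred_eq] at hA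
    exact insert_erase hA.2.1
  · intro B hB
    simp only [coe_filter, mem_powersetCard, Set.mem_ofPred_eq] at hB
    exact erase_insert fun h => by simpa using hB.1.1 h

theorem card_filter_erase_mem_iff_notMem {k : ℕ} (hD : #D = 2 * k) {A : Finset ι}
    (hA : A ∈ D.powersetCard k) (i : ι) : #{j ∈ D.erase i | j ∈ A ↔ i ∉ A} = k := by
  rw [mem_powersetCard] at hA
  by_cases hiA : i ∈ A
  · have : {j ∈ D.erase i | j ∈ A ↔ i ∉ A} = D \ A := by
      ext j; simp only [mem_filter, mem_erase, mem_sdiff, hiA, not_true, iff_false]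
      exact ⟨fun h => ⟨h.1.2, h.2⟩, fun h => ⟨⟨fun hj => h.2 (hj ▸ hiA), h.1⟩, h.2⟩⟩
    rw [this, card_sdiff_of_subset hA.1, hD, hA.2]; omega
  · have : {j ∈ D.erase i | j ∈ A ↔ i ∉ A} = A := by
      ext j; simp only [mem_filter, mem_erase, hiA, not_false_eq_true, iff_true]
      exact ⟨fun h => h.2, fun h => ⟨⟨fun hj => hiA (hj ▸ h), hA.1 h⟩, h⟩⟩
    rw [this, hA.2]

theorem mul_subsetWeightCount_eq_sum {k : ℕ} (hD : #D = 2 * (k + 1)) (hi : i ∈ D) (s : ℤ) :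
    (k + 1) * subsetWeightCount D (k + 1) c s =
      ∑ j ∈ D.erase i, (subsetWeightCount ((D.erase i).erase j) k c (s - c i) +
        subsetWeightCount ((D.erase i).erase j) k c (s - c j)) := by
  set P := {A ∈ D.powersetCard (k + 1) | ((∑ l ∈ A, c l : ℕ) : ℤ) = s}
  have hsplit : ∀ j ∈ D.erase i, #{A ∈ P | j ∈ A ↔ i ∉ A} =
      subsetWeightCount ((D.erase i).erase j) k c (s - c i) +
        subsetWeightCount ((D.erase i).erase j) k c (s - c j) := by
    intro j hj
    have hji := ne_of_mem_erase hj
    rw [← card_filter_mem_notMem_eq_subsetWeightCount hi hji.symm,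
      erase_right_comm, ← card_filter_mem_notMem_eq_subsetWeightCount (mem_of_mem_erase hj) hji,
      ← card_union_of_disjoint]
    · congr 1; ext A; simp only [P, mem_filter, mem_union]; tauto
    · exact disjoint_filter.2 fun A _ h h' => h'.2.1 h.1
  calc (k + 1) * #P = ∑ A ∈ P, #{j ∈ D.erase i | j ∈ A ↔ i ∉ A} := by
        rw [sum_congr rfl fun A hA => card_filter_erase_mem_iff_notMem hD (mem_filter.1 hA).1 i,
          sum_const, smul_eq_mul, mul_comm]
    _ = ∑ j ∈ D.erase i, #{A ∈ P | j ∈ A ↔ i ∉ A} :=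
        sum_card_bipartiteAbove_eq_sum_card_bipartiteBelow (r := fun A j => j ∈ A ↔ i ∉ A)
    _ = _ := sum_congr rfl hsplit

theorem isSymmDecreasing_subsetWeightCount_of_forall_erase {k : ℕ} (hD : #D = 2 * (k + 1))
    (hi : i ∈ D) (hc : ∀ j ∈ D, c j ≤ c i + 1 ∧ c i ≤ c j + 1)
    (h : ∀ j ∈ D.erase i, IsSymmDecreasing (subsetWeightCount ((D.erase i).erase j) k c)
      (∑ l ∈ (D.erase i).erase j, c l : ℕ)) :
    IsSymmDecreasing (subsetWeightCount D (k + 1) c) (∑ l ∈ D, c l : ℕ) := by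
  rw [← isSymmDecreasing_comp_iff (g := ((k + 1) * ·))
    fun a b => Nat.mul_le_mul_left_iff k.succ_pos]
  have hfun : (((k + 1) * ·) ∘ subsetWeightCount D (k + 1) c) = fun s => ∑ j ∈ D.erase i,
      (subsetWeightCount ((D.erase i).erase j) k c (s - c i) +
        subsetWeightCount ((D.erase i).erase j) k c (s - c j)) :=
    funext (mul_subsetWeightCount_eq_sum hD hi)
  rw [hfun]
  refine IsSymmDecreasing.sum fun j hj => ?_
  have hsum : ((∑ l ∈ (D.erase i).erase j, c l : ℕ) : ℤ) + c i + c j = (∑ l ∈ D, c l : ℕ) := by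
    rw [← add_sum_erase D c hi, ← add_sum_erase (D.erase i) c hj]; push_cast; ring
  have hcj := hc j (mem_of_mem_erase hj)
  rw [← hsum]
  exact (h j hj).add_shift (by omega) (by omega)

end SubsetWeightCount

section BalancedDesign

def outcomeSum (p : Bool × Bool) : ℕ := p.1.toNat + p.2.toNat

theorem b2r_eq_toNat (b : Bool) : b2r b = b.toNat := by
  cases b <;> simp [b2r]

theorem card_filter_assign {n m : ℕ} (E : (Fin n → Bool) → Prop) [DecidablePred E] :
    #{z ∈ Assign n m | E z} = #{A ∈ (univ : Finset (Fin n)).powersetCard m | E (· ∈ A)} := by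
  refine card_nbij' (fun z => ({i | z i = true} : Finset (Fin n))) (fun A i => i ∈ A) ?_ ?_ ?_ ?_
  · intro z hz
    simp_all [Assign]
  · intro A hA
    simp_all [Assign]
  · intro z _
    funext i; simp
  · intro A _
    ext i; simp

theorem pr_eq_card_powersetCard {n m : ℕ} (E : (Fin n → Bool) → Prop) [DecidablePred E] :
    Pr n m E = #{A ∈ (univ : Finset (Fin n)).powersetCard m | E (· ∈ A)} / n.choose m := by
  have hAssign : #(Assign n m) = n.choose m := by
    simpa using card_filter_assign (n := n) (m := m) fun _ => True
  rw [Pr, ← hAssign, ← card_filter_assign]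
  congr

theorem neyman_obsOutcome_mem {n m : ℕ} (hn : n = 2 * m) (w : Fin n → Bool × Bool)
    (A : Finset (Fin n)) :
    neyman n m (obsOutcome n w (· ∈ A)) (· ∈ A) =
      (((∑ i ∈ A, outcomeSum (w i) : ℕ) : ℝ) - (∑ i, (w i).1.toNat : ℕ)) / m := by
  have hnm : (n : ℝ) - m = m := by rw [hn]; push_cast; ring
  have htreated : ∀ j, (if decide (j ∈ A) then b2r (obsOutcome n w (· ∈ A) j) else 0) =
      if j ∈ A then ((w j).2.toNat : ℝ) else 0 := fun j => by
    by_cases hj : j ∈ A <;> simp [obsOutcome, hj, b2r_eq_toNat]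
  have hcontrol : ∀ j, (if decide (j ∈ A) then 0 else b2r (obsOutcome n w (· ∈ A) j)) =
      ((w j).1.toNat : ℝ) - if j ∈ A then ((w j).1.toNat : ℝ) else 0 := fun j => by
    by_cases hj : j ∈ A <;> simp [obsOutcome, hj, b2r_eq_toNat]
  simp only [neyman, hnm, htreated, hcontrol, sum_sub_distrib, sum_ite_mem, univ_inter,
    outcomeSum]
  push_cast
  rw [sum_add_distrib]
  ring

theorem two_mul_mul_sate {n m : ℕ} (hm : 0 < m) (hn : n = 2 * m) (w : Fin n → Bool × Bool) :
    2 * m * sate n w = ((∑ i, outcomeSum (w i) : ℕ) : ℝ) - 2 * (∑ i, (w i).1.toNat : ℕ) := by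
  have hn' : (n : ℝ) = 2 * m := by rw [hn]; push_cast; ring
  rw [sate, hn', mul_div_cancel₀ _ (by positivity)]
  simp only [outcomeSum, b2r_eq_toNat]
  push_cast
  rw [sum_add_distrib, sum_sub_distrib]
  ring

theorem pmfT_eq_subsetWeightCount {n m : ℕ} (hm : 0 < m) (hn : n = 2 * m)
    (w : Fin n → Bool × Bool) (s : ℤ) :
    pmfT n m w ((s - (∑ i, (w i).1.toNat : ℕ)) / m) =
      subsetWeightCount univ m (fun i => outcomeSum (w i)) s / n.choose m := by
  classical
  rw [pmfT, pr_eq_card_powersetCard, subsetWeightCount]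
  congr 3
  ext A
  simp only [mem_filter, neyman_obsOutcome_mem hn]
  rw [div_left_inj' (by positivity), sub_left_inj, ← Int.cast_natCast, Int.cast_inj]

theorem sDon_pmfT_iff {n m : ℕ} (hm : 0 < m) (hn : n = 2 * m) (w : Fin n → Bool × Bool) :
    SDon (pmfT n m w) (lattZ m) (sate n w) ↔
      IsSymmDecreasing (subsetWeightCount univ m (fun i => outcomeSum (w i)))
        (∑ i, outcomeSum (w i) : ℕ) := by
  have hchoose : (0 : ℝ) < n.choose m := by exact_mod_cast Nat.choose_pos (by omega)
  rw [sDon_lattZ_iff hm (c := (∑ i, outcomeSum (w i) : ℕ)) (d := (∑ i, (w i).1.toNat : ℕ))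
      (by exact_mod_cast two_mul_mul_sate hm hn w),
    ← isSymmDecreasing_comp_iff (g := fun q : ℕ => (q : ℝ) / n.choose m)
      fun a b => by rw [div_le_div_iff_of_pos_right hchoose, Nat.cast_le]]
  simp only [Int.cast_natCast, pmfT_eq_subsetWeightCount hm hn w]
  rfl

theorem outcomeSum_le_two (p : Bool × Bool) : outcomeSum p ≤ 2 := by
  rcases p with ⟨_ | _, _ | _⟩ <;> simp [outcomeSum]

theorem exists_eq_of_vcount_pos {n : ℕ} {w : Fin n → Bool × Bool} {a b : Bool}
    (h : 0 < vcount n w a b) : ∃ i, w i = (b, a) := by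
  obtain ⟨i, hi⟩ := card_pos.1 h
  simp only [mem_filter, mem_univ, true_and] at hi
  exact ⟨i, Prod.ext hi.2 hi.1⟩

theorem vcount_comp_add_vcount_pair {n n' : ℕ} (w : Fin n → Bool × Bool) {i j : Fin n}
    (hij : i ≠ j) (e : Fin n' ↪ Fin n) (he : univ.map e = (univ.erase i).erase j) (a b : Bool) :
    vcount n' (w ∘ e) a b + vcount 2 ![w i, w j] a b = vcount n w a b := by
  simp only [vcount, card_filter, Fin.sum_univ_two, Function.comp_apply,
    Matrix.cons_val_zero, Matrix.cons_val_one]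
  rw [← sum_map univ e (fun k => if (w k).2 = a ∧ (w k).1 = b then 1 else 0), he,
    ← add_sum_erase univ _ (mem_univ i), ← add_sum_erase (univ.erase i) _
      (mem_erase.2 ⟨hij.symm, mem_univ j⟩)]
  ac_rfl

-- `vcount 2 ![w i, w j]` is the count vector `a` of the removed pair `{i, j}`.
theorem sDon_pmfT_of_forall_reduced {n m : ℕ} (hm : 0 < m) (hn : n = 2 * m)
    (w : Fin n → Bool × Bool) {i : Fin n} (hi : outcomeSum (w i) = 1)
    (hred : ∀ j, j ≠ i → ∀ w0 : Fin (n - 2) → Bool × Bool,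
      (∀ a b, vcount (n - 2) w0 a b + vcount 2 ![w i, w j] a b = vcount n w a b) →
        SDon (pmfT (n - 2) (m - 1) w0) (lattZ (m - 1)) (sate (n - 2) w0)) :
    SDon (pmfT n m w) (lattZ m) (sate n w) := by
  obtain ⟨k, rfl⟩ : ∃ k, m = k + 1 := Nat.exists_eq_add_one.2 hm
  rw [sDon_pmfT_iff hm hn]
  refine isSymmDecreasing_subsetWeightCount_of_forall_erase (by simp [hn]) (mem_univ i)
    (fun j _ => by have := outcomeSum_le_two (w j); omega) fun j hj => ?_
  have hji := ne_of_mem_erase hj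
  have hcard : #((univ.erase i).erase j) = n - 2 := by
    rw [card_erase_of_mem (mem_erase.2 ⟨hji, mem_univ j⟩), card_erase_of_mem (mem_univ i),
      card_univ, Fintype.card_fin, Nat.sub_sub]
  rcases Nat.eq_zero_or_pos k with rfl | hk
  · rw [card_eq_zero.1 (hcard.trans (by omega)), sum_empty]
    exact isSymmDecreasing_subsetWeightCount_empty _
  · set e := (((univ.erase i).erase j).orderEmbOfFin hcard).toEmbedding
    have he : univ.map e = (univ.erase i).erase j := map_orderEmbOfFin_univ _ _
    rw [← he, subsetWeightCount_map, sum_map]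
    have := hred j hji (w ∘ e) (vcount_comp_add_vcount_pair w hji.symm e he)
    rw [Nat.add_sub_cancel] at this
    exact (sDon_pmfT_iff hk (by omega) (w ∘ e)).1 this

end BalancedDesign

/-- Induction step for the SD property in the balanced case.  Let
`v = (v₁₁, v₁₀, v₀₁, v₀₀)` be the count vector of `w`.  If either
(1) `v₁₀ ≥ 2` and for every `a ∈ {(1,1,0,0), (0,2,0,0), (0,1,1,0), (0,1,0,1)}` with
`v − a` componentwise nonnegative, the pmf of `T(v − a, Z')` (with `Z'` uniform on the
assignments of `n − 2` subjects with `m − 1` treated) is SD on `(m−1)⁻¹ℤ`; or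
(2) `v₀₁ ≥ 2` and the same holds for every
`a ∈ {(1,0,1,0), (0,1,1,0), (0,0,2,0), (0,0,1,1)}`;
then the pmf of `T(v, Z)` is SD on `m⁻¹ℤ`. -/
theorem stmt11 (m : ℕ) (hm : 0 < m) (n : ℕ) (hn : n = 2 * m)
    (w : Fin n → Bool × Bool)
    (h :
      (2 ≤ vcount n w true false ∧
          ∀ a1 a2 a3 a4 : ℕ,
            ((a1, a2, a3, a4) = ((1 : ℕ), (1 : ℕ), (0 : ℕ), (0 : ℕ)) ∨
              (a1, a2, a3, a4) = ((0 : ℕ), (2 : ℕ), (0 : ℕ), (0 : ℕ)) ∨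
              (a1, a2, a3, a4) = ((0 : ℕ), (1 : ℕ), (1 : ℕ), (0 : ℕ)) ∨
              (a1, a2, a3, a4) = ((0 : ℕ), (1 : ℕ), (0 : ℕ), (1 : ℕ))) →
            a1 ≤ vcount n w true true → a2 ≤ vcount n w true false →
            a3 ≤ vcount n w false true → a4 ≤ vcount n w false false →
            ∀ w0 : Fin (n - 2) → Bool × Bool,
              vcount (n - 2) w0 true true = vcount n w true true - a1 →
              vcount (n - 2) w0 true false = vcount n w true false - a2 →
              vcount (n - 2) w0 false true = vcount n w false true - a3 →
              vcount (n - 2) w0 false false = vcount n w false false - a4 →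
              SDon (pmfT (n - 2) (m - 1) w0) (lattZ (m - 1)) (sate (n - 2) w0)) ∨
        (2 ≤ vcount n w false true ∧
          ∀ a1 a2 a3 a4 : ℕ,
            ((a1, a2, a3, a4) = ((1 : ℕ), (0 : ℕ), (1 : ℕ), (0 : ℕ)) ∨
              (a1, a2, a3, a4) = ((0 : ℕ), (1 : ℕ), (1 : ℕ), (0 : ℕ)) ∨
              (a1, a2, a3, a4) = ((0 : ℕ), (0 : ℕ), (2 : ℕ), (0 : ℕ)) ∨
              (a1, a2, a3, a4) = ((0 : ℕ), (0 : ℕ), (1 : ℕ), (1 : ℕ))) →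
            a1 ≤ vcount n w true true → a2 ≤ vcount n w true false →
            a3 ≤ vcount n w false true → a4 ≤ vcount n w false false →
            ∀ w0 : Fin (n - 2) → Bool × Bool,
              vcount (n - 2) w0 true true = vcount n w true true - a1 →
              vcount (n - 2) w0 true false = vcount n w true false - a2 →
              vcount (n - 2) w0 false true = vcount n w false true - a3 →
              vcount (n - 2) w0 false false = vcount n w false false - a4 →
              SDon (pmfT (n - 2) (m - 1) w0) (lattZ (m - 1)) (sate (n - 2) w0))) :
    SDon (pmfT n m w) (lattZ m) (sate n w) := by
  rcases h with ⟨hv, hred⟩ | ⟨hv, hred⟩ <;>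
  · obtain ⟨i, hi⟩ := exists_eq_of_vcount_pos (zero_lt_two.trans_le hv)
    refine sDon_pmfT_of_forall_reduced hm hn w (i := i) (by rw [hi]; rfl) fun j _ w0 hw0 => ?_
    refine hred _ _ _ _ ?_ (le_add_self.trans_eq (hw0 _ _)) (le_add_self.trans_eq (hw0 _ _))
      (le_add_self.trans_eq (hw0 _ _)) (le_add_self.trans_eq (hw0 _ _)) w0
      (Nat.eq_sub_of_add_eq (hw0 _ _)) (Nat.eq_sub_of_add_eq (hw0 _ _))
      (Nat.eq_sub_of_add_eq (hw0 _ _)) (Nat.eq_sub_of_add_eq (hw0 _ _))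
    -- whatever the type of `j`, the count vector of `{i, j}` is one of the four listed
    rw [hi]
    generalize w j = q
    revert q
    decide
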